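/- Turek's allocation family for a task set of n tasks over a set C of candidate slice counts contains at most |C|·n allocations. -/

import Mathlib

/-!
The total position `∑ i, a k i` strictly increases along the family, so it is at least `k` at the
`k`-th allocation. On the other hand every position is at most `c - 1`, so the total is at most
`(c - 1) · n`. Comparing at the last allocation gives `K - 1 ≤ (c - 1) · n < c · n`.
-/

theorem Finset.sum_add_card_le_mul_card {ι : Type*} (s : Finset ι) (f : ι → ℕ) (c : ℕ)
    (hf : ∀ i ∈ s, f i < c) : ∑ i ∈ s, f i + s.card ≤ c * s.card := by
  calc ∑ i ∈ s, f i + s.card = ∑ i ∈ s, (f i + 1) := by simp [Finset.sum_add_distrib]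
    _ ≤ s.card • c := Finset.sum_le_card_nsmul s _ c hf
    _ = c * s.card := by rw [smul_eq_mul, mul_comm]

theorem Nat.le_apply_of_lt_succ_of_le {K : ℕ} {s : ℕ → ℕ}
    (hs : ∀ k, k < K → s k < s (k + 1)) : ∀ k ≤ K, k ≤ s k :=
  StrictMonoOn.Iic_id_le <| strictMonoOn_Iic_of_lt_succ fun k hk ↦ by
    simpa only [Order.succ_eq_add_one] using hs k hk

/-- `a k i` is the position, in the ordered set `C` of `c` candidate slice counts, of the slice
count that allocation `k` gives to task `i`. -/
theorem turek_family_size_le_general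
    (n c K : ℕ) (hn : 1 ≤ n)
    (a : ℕ → Fin n → ℕ)
    (hpos : ∀ k, k < K → ∀ i, a k i < c)
    (hmono : ∀ k, k + 1 < K → ∑ i, a k i < ∑ i, a (k + 1) i) :
    K ≤ c * n := by
  obtain rfl | hK := Nat.eq_zero_or_pos K
  · exact Nat.zero_le _
  have hlast : K - 1 < K := Nat.sub_lt hK one_pos
  have hgrowth : K - 1 ≤ ∑ i, a (K - 1) i :=
    Nat.le_apply_of_lt_succ_of_le (fun k hk ↦ hmono k (by omega)) (K - 1) le_rfl
  have hbound := Finset.sum_add_card_le_mul_card Finset.univ (a (K - 1)) c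
    fun i _ ↦ hpos (K - 1) hlast i
  rw [Finset.card_univ, Fintype.card_fin] at hbound
  omega

/-- Turek's allocation family has at most `|C|·n` members: if each of the `K`
allocations assigns to every task a position among the `c = |C|` candidate
slice counts (value `< c`), and the total of positions strictly increases
from each allocation to the next, then `K ≤ c·n`. -/
theorem turek_family_size_le
    (n c K : ℕ) (hn : 1 ≤ n) (hc : 1 ≤ c)
    (a : ℕ → Fin n → ℕ)
    (hpos : ∀ k, k < K → ∀ i, a k i < c)
    (hmono : ∀ k, k + 1 < K → ∑ i, a k i < ∑ i, a (k + 1) i) :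
    K ≤ c * n :=
  turek_family_size_le_general n c K hn a hpos hmono
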